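/- Consistency of the group-averaging denoiser: under the assumptions of finite X, bounded noisy labels ỹ ∈ [a,b], and zero-mean noise E[ỹ|y] = y, the denoised label dn(x_i, ỹ_i; D̃_n) converges in probability to the true soft label y_i as the dataset size n → ∞. -/

import Mathlib

open MeasureTheory ProbabilityTheory Finset Filter

/-!
For a fixed feature value `v`, the numerator and the denominator of the group average are
partial sums of the i.i.d. sequences `1{x j = v} ỹ j` and `1{x j = v}`. By the strong law of
large numbers their ratio converges almost surely to `E[ỹ 0; x 0 = v] / P(x 0 = v)`, and the
zero-mean noise assumption identifies the numerator as `f v · P(x 0 = v)`; values `v` with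
`P(x 0 = v) = 0` are almost surely never taken by `x 0`. Since `X` is countable, these almost
sure limits hold simultaneously for all `v`, in particular at `v = x 0 ω`; almost sure
convergence implies convergence in probability.
-/

/-- The paper's `dn(x_i, ỹ_i; D̃)` for `v = x_i` and the dataset of the first `n + 1` samples. -/
noncomputable def groupAverage {Ω X : Type*} [DecidableEq X] (x : ℕ → Ω → X)
    (y : ℕ → Ω → ℝ) (v : X) (n : ℕ) (ω : Ω) : ℝ :=
  (∑ j ∈ range (n + 1), if x j ω = v then y j ω else 0) /
    ∑ j ∈ range (n + 1), if x j ω = v then (1 : ℝ) else 0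

section StrongLaw

variable {Ω β : Type*} {mΩ : MeasurableSpace Ω} [MeasurableSpace β] {μ : Measure Ω}
  {Z : ℕ → Ω → β}

theorem ae_tendsto_average_comp_of_iid (hindep : Pairwise fun i j => IndepFun (Z i) (Z j) μ)
    (hident : ∀ j, IdentDistrib (Z j) (Z 0) μ μ) {g : β → ℝ} (hg : Measurable g)
    (hint : Integrable (g ∘ Z 0) μ) :
    ∀ᵐ ω ∂μ, Tendsto (fun n : ℕ => (∑ j ∈ range (n + 1), g (Z j ω)) / (n + 1 : ℕ))
      atTop (nhds μ[g ∘ Z 0]) := by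
  have hlaw := strong_law_ae_real (fun j => g ∘ Z j) hint
    (fun i j hij => (hindep hij).comp hg hg) (fun j => (hident j).comp hg)
  filter_upwards [hlaw] with ω hω
  exact hω.comp (tendsto_add_atTop_nat 1)

theorem ae_tendsto_sum_div_sum_comp_of_iid (hindep : Pairwise fun i j => IndepFun (Z i) (Z j) μ)
    (hident : ∀ j, IdentDistrib (Z j) (Z 0) μ μ) {g h : β → ℝ} (hg : Measurable g)
    (hh : Measurable h) (hgi : Integrable (g ∘ Z 0) μ) (hhi : Integrable (h ∘ Z 0) μ)
    (hE : μ[h ∘ Z 0] ≠ 0) :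
    ∀ᵐ ω ∂μ, Tendsto
      (fun n : ℕ => (∑ j ∈ range (n + 1), g (Z j ω)) / ∑ j ∈ range (n + 1), h (Z j ω))
      atTop (nhds (μ[g ∘ Z 0] / μ[h ∘ Z 0])) := by
  filter_upwards [ae_tendsto_average_comp_of_iid hindep hident hg hgi,
    ae_tendsto_average_comp_of_iid hindep hident hh hhi] with ω hgω hhω
  refine (hgω.div hhω hE).congr fun n => ?_
  exact div_div_div_cancel_right₀ (Nat.cast_ne_zero.mpr n.succ_ne_zero) _ _

end StrongLaw

theorem setIntegral_preimage_singleton_of_ae_eq_condExp {Ω X : Type*} {mΩ : MeasurableSpace Ω}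
    [MeasurableSpace X] [MeasurableSingletonClass X] {μ : Measure Ω} [IsFiniteMeasure μ]
    {x : Ω → X} {y : Ω → ℝ} {f : X → ℝ} (hx : Measurable x) (hy : Integrable y μ)
    (hmean : (fun ω => f (x ω)) =ᵐ[μ] μ[y | MeasurableSpace.comap x inferInstance]) (v : X) :
    ∫ ω in x ⁻¹' {v}, y ω ∂μ = f v * μ.real (x ⁻¹' {v}) := by
  have hm : MeasurableSpace.comap x inferInstance ≤ mΩ := hx.comap_le
  have hs : MeasurableSet[MeasurableSpace.comap x inferInstance] (x ⁻¹' {v}) :=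
    ⟨{v}, measurableSet_singleton v, rfl⟩
  calc ∫ ω in x ⁻¹' {v}, y ω ∂μ
      = ∫ ω in x ⁻¹' {v}, (μ[y | MeasurableSpace.comap x inferInstance]) ω ∂μ :=
        (setIntegral_condExp hm hy hs).symm
    _ = ∫ ω in x ⁻¹' {v}, f (x ω) ∂μ :=
        setIntegral_congr_ae (hm _ hs) (hmean.mono fun ω h _ => h.symm)
    _ = ∫ _ in x ⁻¹' {v}, f v ∂μ := setIntegral_congr_fun (hm _ hs) fun ω hω => by rw [hω]
    _ = f v * μ.real (x ⁻¹' {v}) := by rw [setIntegral_const, smul_eq_mul, mul_comm]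

section GroupAverage

variable {Ω X : Type*} {mΩ : MeasurableSpace Ω} [MeasurableSpace X] [MeasurableSingletonClass X]
  [DecidableEq X] {μ : Measure Ω} [IsFiniteMeasure μ] {f : X → ℝ} {x : ℕ → Ω → X}
  {y : ℕ → Ω → ℝ}

theorem ae_tendsto_groupAverage_of_eq
    (hmeas : Measurable (fun ω => (x 0 ω, y 0 ω)))
    (hindep : Pairwise fun i j =>
      IndepFun (fun ω => (x i ω, y i ω)) (fun ω => (x j ω, y j ω)) μ)
    (hident : ∀ j, IdentDistrib (fun ω => (x j ω, y j ω)) (fun ω => (x 0 ω, y 0 ω)) μ μ)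
    (hy : Integrable (y 0) μ)
    (hmean : (fun ω => f (x 0 ω)) =ᵐ[μ] μ[y 0 | MeasurableSpace.comap (x 0) inferInstance])
    (v : X) :
    ∀ᵐ ω ∂μ, x 0 ω = v → Tendsto (fun n => groupAverage x y v n ω) atTop (nhds (f v)) := by
  have hx : Measurable (x 0) := measurable_fst.comp hmeas
  have hs : MeasurableSet (x 0 ⁻¹' {v}) := hx (measurableSet_singleton v)
  by_cases hμs : μ (x 0 ⁻¹' {v}) = 0
  · filter_upwards [measure_eq_zero_iff_ae_notMem.mp hμs] with ω hω hv
    exact (hω hv).elim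
  have hpos : μ.real (x 0 ⁻¹' {v}) ≠ 0 := (measureReal_ne_zero_iff).mpr hμs
  have hv : MeasurableSet {p : X × ℝ | p.1 = v} := measurable_fst (measurableSet_singleton v)
  have hnum : (fun p : X × ℝ => if p.1 = v then p.2 else 0) ∘ (fun ω => (x 0 ω, y 0 ω)) =
      (x 0 ⁻¹' {v}).indicator (y 0) := by
    ext ω; by_cases h : x 0 ω = v <;> simp [h]
  have hden : (fun p : X × ℝ => if p.1 = v then (1 : ℝ) else 0) ∘ (fun ω => (x 0 ω, y 0 ω)) =
      (x 0 ⁻¹' {v}).indicator 1 := by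
    ext ω; by_cases h : x 0 ω = v <;> simp [h]
  have hlaw := ae_tendsto_sum_div_sum_comp_of_iid hindep hident
    (Measurable.ite hv measurable_snd measurable_const)
    (Measurable.ite hv measurable_const measurable_const)
    (hnum ▸ hy.indicator hs) (hden ▸ (integrable_const 1).indicator hs)
    (by rwa [hden, integral_indicator_one hs])
  rw [hnum, hden, integral_indicator hs, integral_indicator_one hs,
    setIntegral_preimage_singleton_of_ae_eq_condExp hx hy hmean, mul_div_cancel_right₀ _ hpos]
    at hlaw
  filter_upwards [hlaw] with ω hω _ using hω

theorem ae_tendsto_groupAverage_self [Countable X]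
    (hmeas : Measurable (fun ω => (x 0 ω, y 0 ω)))
    (hindep : Pairwise fun i j =>
      IndepFun (fun ω => (x i ω, y i ω)) (fun ω => (x j ω, y j ω)) μ)
    (hident : ∀ j, IdentDistrib (fun ω => (x j ω, y j ω)) (fun ω => (x 0 ω, y 0 ω)) μ μ)
    (hy : Integrable (y 0) μ)
    (hmean : (fun ω => f (x 0 ω)) =ᵐ[μ] μ[y 0 | MeasurableSpace.comap (x 0) inferInstance]) :
    ∀ᵐ ω ∂μ, Tendsto (fun n => groupAverage x y (x 0 ω) n ω) atTop (nhds (f (x 0 ω))) := by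
  filter_upwards [ae_all_iff.mpr (ae_tendsto_groupAverage_of_eq hmeas hindep hident hy hmean)]
    with ω hω
  exact hω _ rfl

theorem measurable_groupAverage_self [Countable X] (hx : ∀ j, Measurable (x j))
    (hy : ∀ j, Measurable (y j)) (n : ℕ) :
    Measurable fun ω => groupAverage x y (x 0 ω) n ω := by
  have hsame : ∀ j, MeasurableSet {ω | x j ω = x 0 ω} :=
    fun j => measurableSet_eq_fun (hx j) (hx 0)
  exact (Finset.measurable_sum _ fun j _ => (hy j).ite (hsame j) measurable_const).div
    (Finset.measurable_sum _ fun j _ => measurable_const.ite (hsame j) measurable_const)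

end GroupAverage

theorem consistency_group_averaging_denoiser_general
    {Ω X : Type*} [MeasurableSpace Ω] [MeasurableSpace X]
    [MeasurableSingletonClass X] [Fintype X] [DecidableEq X]
    (μ : Measure Ω) [IsProbabilityMeasure μ]
    (f : X → ℝ) (x : ℕ → Ω → X) (ynoisy : ℕ → Ω → ℝ)
    (a b : ℝ)
    (hmeas : ∀ j, Measurable (fun ω => (x j ω, ynoisy j ω)))
    (hrange : ∀ j ω, ynoisy j ω ∈ Set.Icc a b)
    (hindep : iIndepFun
        (fun j ω => (x j ω, ynoisy j ω)) μ)
    (hident : ∀ j, μ.map (fun ω => (x j ω, ynoisy j ω))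
        = μ.map (fun ω => (x 0 ω, ynoisy 0 ω)))
    (hmean : ∀ j, (fun ω => f (x j ω))
        =ᵐ[μ] μ[ynoisy j | MeasurableSpace.comap (x j) inferInstance]) :
    ∀ ε > (0 : ℝ),
      Tendsto (fun n : ℕ =>
          μ {ω | ε <
              |(∑ j ∈ Finset.range (n + 1),
                    (if x j ω = x 0 ω then ynoisy j ω else 0))
                  / (∑ j ∈ Finset.range (n + 1),
                    (if x j ω = x 0 ω then (1 : ℝ) else 0))
                - f (x 0 ω)|})
        atTop (nhds 0) := by
  intro ε hε
  have hx : ∀ j, Measurable (x j) := fun j => measurable_fst.comp (hmeas j)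
  have hy : ∀ j, Measurable (ynoisy j) := fun j => measurable_snd.comp (hmeas j)
  have hint : Integrable (ynoisy 0) μ := .of_bound (hy 0).aestronglyMeasurable (max |a| |b|)
    (ae_of_all _ fun ω => abs_le_max_abs_abs (hrange 0 ω).1 (hrange 0 ω).2)
  have hconv := tendstoInMeasure_of_tendsto_ae
    (fun n => (measurable_groupAverage_self hx hy n).aestronglyMeasurable)
    (ae_tendsto_groupAverage_self (hmeas 0) (fun i j hij => hindep.indepFun hij)
      (fun j => ⟨(hmeas j).aemeasurable, (hmeas 0).aemeasurable, hident j⟩) hint (hmean 0))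
  refine tendsto_of_tendsto_of_tendsto_of_le_of_le tendsto_const_nhds
    (tendstoInMeasure_iff_dist.mp hconv ε hε) (fun n => zero_le)
    (fun n => measure_mono fun ω hω => ?_)
  exact (Real.dist_eq _ _).ge.trans' hω.le

/-- Consistency of the group-averaging denoiser: for i.i.d.
samples `(x j, ỹ j)` with finite feature space `X`, bounded noisy labels
`ỹ j ∈ [a,b]` whose conditional mean given the feature is the deterministic
soft label `f (x j)` (zero-mean noise), and every feature value having
positive probability, the denoised label
`dn(x 0, ỹ 0; D̃_n) = (Σ_{j ≤ n} 1{x j = x 0} ỹ j) / (Σ_{j ≤ n} 1{x j = x 0})`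
converges in probability to the true soft label `f (x 0)` as `n → ∞`. -/
theorem consistency_group_averaging_denoiser
    {Ω X : Type*} [MeasurableSpace Ω] [MeasurableSpace X]
    [MeasurableSingletonClass X] [Fintype X] [DecidableEq X]
    (μ : Measure Ω) [IsProbabilityMeasure μ]
    (f : X → ℝ) (x : ℕ → Ω → X) (ynoisy : ℕ → Ω → ℝ)
    (a b : ℝ) (hab : a ≤ b)
    (hmeas : ∀ j, Measurable (fun ω => (x j ω, ynoisy j ω)))
    (hrange : ∀ j ω, ynoisy j ω ∈ Set.Icc a b)
    (hindep : iIndepFun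
        (fun j ω => (x j ω, ynoisy j ω)) μ)
    (hident : ∀ j, μ.map (fun ω => (x j ω, ynoisy j ω))
        = μ.map (fun ω => (x 0 ω, ynoisy 0 ω)))
    (hmean : ∀ j, (fun ω => f (x j ω))
        =ᵐ[μ] μ[ynoisy j | MeasurableSpace.comap (x j) inferInstance])
    (hsupp : ∀ v : X, μ {ω | x 0 ω = v} ≠ 0) :
    ∀ ε > (0 : ℝ),
      Tendsto (fun n : ℕ =>
          μ {ω | ε <
              |(∑ j ∈ Finset.range (n + 1),
                    (if x j ω = x 0 ω then ynoisy j ω else 0))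
                  / (∑ j ∈ Finset.range (n + 1),
                    (if x j ω = x 0 ω then (1 : ℝ) else 0))
                - f (x 0 ω)|})
        atTop (nhds 0) :=
  consistency_group_averaging_denoiser_general μ f x ynoisy a b hmeas hrange hindep hident hmean
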